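/- With s_n defined by s_n = x_1^{-n}x_2^{-n} Σ_{q+r≤n} C(n-r,q)C(n-q,r) x_1^{2q}x_2^{2r} (so s_0 = 1, s_1 = (x_1^2+x_2^2+1)/(x_1x_2)), and z_n = x_1^{-n}x_2^{-n}( x_1^{2n} + x_2^{2n} + Σ_{q+r≤n-1} (n/(n-q-r)) C(n-1-r,q)C(n-1-q,r) x_1^{2q}x_2^{2r} ), the relation z_n = s_n − s_{n-2} holds for all n ≥ 2. -/

import Mathlib

set_option maxHeartbeats 1600000

noncomputable section

/-- The ambient field `ℚ(x₁, x₂)` of rational functions in two variables. -/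
abbrev Kfield : Type := FractionRing (MvPolynomial (Fin 2) ℚ)

/-- The first indeterminate `x₁`. -/
def X1 : Kfield := algebraMap (MvPolynomial (Fin 2) ℚ) Kfield (MvPolynomial.X 0)

/-- The second indeterminate `x₂`. -/
def X2 : Kfield := algebraMap (MvPolynomial (Fin 2) ℚ) Kfield (MvPolynomial.X 1)

private lemma e1nat (q b : ℕ) : (b+1) * ((q+b+1).choose q) = (q+b+1) * ((q+b).choose q) := by
  have h3 : (q+b+1).choose q = (q+b+1).choose (b+1) := by
    rw [show q + b + 1 = q + (b+1) by ring, Nat.choose_symm_add]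
  have h2 : (q+b).choose q = (q+b).choose b := Nat.choose_symm_add
  have h := Nat.add_one_mul_choose_eq (q+b) b
  rw [h3, h2]
  linarith [h]

private lemma e3nat (q b : ℕ) (hq : 1 ≤ q) :
    (b+1) * ((q+b).choose (q-1)) = q * ((q+b).choose q) := by
  obtain ⟨p, rfl⟩ : ∃ p, q = p + 1 := ⟨q-1, by omega⟩
  simp only [Nat.add_sub_cancel]
  have h := Nat.choose_succ_right_eq (p+1+b) p
  rw [show p + 1 + b - p = b + 1 by omega] at h
  linarith [h]

private lemma key (n q r : ℕ) (hn : 2 ≤ n) (hq : q ≤ n) (hr : r ≤ n) :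
    (((n - r).choose q * (n - q).choose r : ℕ) : Kfield) =
      ((n : Kfield) / ((n - q - r : ℕ) : Kfield)) *
          (((n - 1 - r).choose q * ((n - 1 - q).choose r) : ℕ) : Kfield)
        + (if q = 0 ∨ r = 0 then 0
            else (((n - 1 - r).choose (q - 1) * ((n - 1 - q).choose (r - 1)) : ℕ) : Kfield))
        + (if q = n ∧ r = 0 then 1 else 0)
        + (if q = 0 ∧ r = n then 1 else 0) := by
  rcases lt_trichotomy (q + r) n with h | h | h
  · -- main case q + r < n
    rw [if_neg (by omega : ¬(q = n ∧ r = 0)), if_neg (by omega : ¬(q = 0 ∧ r = n)),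
      add_zero, add_zero]
    obtain ⟨b, rfl⟩ : ∃ b, n = q + r + b + 1 := ⟨n - q - r - 1, by omega⟩
    rw [show q + r + b + 1 - q - r = b + 1 by omega,
        show q + r + b + 1 - r = q + b + 1 by omega,
        show q + r + b + 1 - q = r + b + 1 by omega,
        show q + r + b + 1 - 1 - r = q + b by omega,
        show q + r + b + 1 - 1 - q = r + b by omega]
    have hb : (((b:ℕ)+1 : ℕ) : Kfield) ≠ 0 := Nat.cast_ne_zero.mpr (by omega)
    rw [div_mul_eq_mul_div, div_add' _ _ _ hb, eq_div_iff hb]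
    have E1' : ((b:Kfield)+1) * ((q+b+1).choose q : ℕ) = ((q:Kfield)+b+1) * ((q+b).choose q : ℕ) := by
      exact_mod_cast congrArg (Nat.cast (R := Kfield)) (e1nat q b)
    have E2' : ((b:Kfield)+1) * ((r+b+1).choose r : ℕ) = ((r:Kfield)+b+1) * ((r+b).choose r : ℕ) := by
      exact_mod_cast congrArg (Nat.cast (R := Kfield)) (e1nat r b)
    by_cases h0 : q = 0 ∨ r = 0
    · rw [if_pos h0, zero_mul, add_zero]
      rcases h0 with rfl | rfl
      · simp only [Nat.zero_add, Nat.choose_zero_right, one_mul]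
        push_cast at E2' ⊢
        linear_combination E2'
      · simp only [Nat.add_zero, Nat.choose_zero_right, mul_one]
        push_cast at E1' ⊢
        linear_combination E1'
    · rw [if_neg h0]
      push_neg at h0
      have E3' : ((b:Kfield)+1) * ((q+b).choose (q-1) : ℕ) = (q:Kfield) * ((q+b).choose q : ℕ) := by
        exact_mod_cast congrArg (Nat.cast (R := Kfield)) (e3nat q b (by omega))
      have E4' : ((b:Kfield)+1) * ((r+b).choose (r-1) : ℕ) = (r:Kfield) * ((r+b).choose r : ℕ) := by
        exact_mod_cast congrArg (Nat.cast (R := Kfield)) (e3nat r b (by omega))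
      apply mul_left_cancel₀ hb
      push_cast at E1' E2' E3' E4' ⊢
      linear_combination ((b:Kfield)+1) * (((r+b+1).choose r : ℕ) : Kfield) * E1'
        + ((q:Kfield)+b+1) * (((q+b).choose q : ℕ) : Kfield) * E2'
        - ((b:Kfield)+1) * (((r+b).choose (r-1) : ℕ) : Kfield) * E3'
        - (q:Kfield) * (((q+b).choose q : ℕ) : Kfield) * E4'
  · -- q + r = n
    rw [show n - q - r = 0 by omega, Nat.cast_zero, div_zero, zero_mul, zero_add]
    by_cases h0 : q = 0
    · subst h0
      obtain rfl : n = r := by omega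
      simp only [Nat.sub_self, Nat.sub_zero, Nat.choose_zero_right, Nat.choose_self]
      simp [show n ≠ 0 by omega]
    · by_cases h1 : r = 0
      · subst h1
        obtain rfl : n = q := by omega
        simp only [Nat.sub_zero, Nat.sub_self, Nat.choose_self, Nat.choose_zero_right]
        simp [show n ≠ 0 by omega]
      · rw [show n - r = q by omega, show n - q = r by omega,
          show n - 1 - r = q - 1 by omega, show n - 1 - q = r - 1 by omega]
        simp only [Nat.choose_self]
        rw [if_neg (show ¬(q = 0 ∨ r = 0) by push_neg; exact ⟨h0, h1⟩),
          if_neg (by omega : ¬(q = n ∧ r = 0)), if_neg (by omega : ¬(q = 0 ∧ r = n))]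
        norm_num
  · -- q + r > n
    rw [show n - q - r = 0 by omega, Nat.cast_zero, div_zero, zero_mul, zero_add]
    have hS : (n - r).choose q = 0 := Nat.choose_eq_zero_of_lt (by omega)
    rw [if_neg (by omega : ¬(q = n ∧ r = 0)), if_neg (by omega : ¬(q = 0 ∧ r = n))]
    by_cases h0 : q = 0 ∨ r = 0
    · rw [if_pos h0]; simp [hS]
    · push_neg at h0
      rw [if_neg (show ¬(q = 0 ∨ r = 0) by push_neg; exact h0)]
      have hd : n - 1 - r < q - 1 ∨ n - 1 - q < r - 1 := by omega
      rcases hd with h' | h'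
      · simp [hS, Nat.choose_eq_zero_of_lt h']
      · simp [hS, Nat.choose_eq_zero_of_lt h']

private lemma core_id (n : ℕ) (hn : 2 ≤ n) :
    X1 ^ (2*n) + X2 ^ (2*n)
      + (∑ q ∈ Finset.range n, ∑ r ∈ Finset.range (n - q),
          ((n : Kfield) / ((n - q - r : ℕ) : Kfield)) *
            (((n - 1 - r).choose q * ((n - 1 - q).choose r) : ℕ) : Kfield) *
            X1 ^ (2 * q) * X2 ^ (2 * r))
      = (∑ q ∈ Finset.range (n + 1), ∑ r ∈ Finset.range (n + 1 - q),
          (((n - r).choose q * (n - q).choose r : ℕ) : Kfield) * X1 ^ (2 * q) * X2 ^ (2 * r))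
        - X1 ^ 2 * X2 ^ 2 *
          (∑ q ∈ Finset.range (n - 2 + 1), ∑ r ∈ Finset.range (n - 2 + 1 - q),
            (((n - 2 - r).choose q * (n - 2 - q).choose r : ℕ) : Kfield) * X1 ^ (2 * q) * X2 ^ (2 * r)) := by
  have hS : (∑ q ∈ Finset.range (n + 1), ∑ r ∈ Finset.range (n + 1 - q),
        (((n - r).choose q * (n - q).choose r : ℕ) : Kfield) * X1 ^ (2 * q) * X2 ^ (2 * r))
      = ∑ q ∈ Finset.range (n + 1), ∑ r ∈ Finset.range (n + 1),
        (((n - r).choose q * (n - q).choose r : ℕ) : Kfield) * X1 ^ (2 * q) * X2 ^ (2 * r) := by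
    refine Finset.sum_congr rfl fun q hq => ?_
    refine Finset.sum_subset (Finset.range_subset_range.mpr (by omega)) fun r hr hr' => ?_
    simp only [Finset.mem_range] at hq hr hr'
    rw [Nat.choose_eq_zero_of_lt (show n - r < q by omega)]
    simp
  have hZzero : ∀ q r : ℕ, n ≤ q + r →
      ((n : Kfield) / ((n - q - r : ℕ) : Kfield)) *
        (((n - 1 - r).choose q * ((n - 1 - q).choose r) : ℕ) : Kfield) *
        X1 ^ (2 * q) * X2 ^ (2 * r) = 0 := by
    intro q r hqr
    rw [show n - q - r = 0 by omega]
    simp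
  have hZ : (∑ q ∈ Finset.range n, ∑ r ∈ Finset.range (n - q),
        ((n : Kfield) / ((n - q - r : ℕ) : Kfield)) *
          (((n - 1 - r).choose q * ((n - 1 - q).choose r) : ℕ) : Kfield) *
          X1 ^ (2 * q) * X2 ^ (2 * r))
      = ∑ q ∈ Finset.range (n + 1), ∑ r ∈ Finset.range (n + 1),
        ((n : Kfield) / ((n - q - r : ℕ) : Kfield)) *
          (((n - 1 - r).choose q * ((n - 1 - q).choose r) : ℕ) : Kfield) *
          X1 ^ (2 * q) * X2 ^ (2 * r) := by
    calc (∑ q ∈ Finset.range n, ∑ r ∈ Finset.range (n - q),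
          ((n : Kfield) / ((n - q - r : ℕ) : Kfield)) *
            (((n - 1 - r).choose q * ((n - 1 - q).choose r) : ℕ) : Kfield) *
            X1 ^ (2 * q) * X2 ^ (2 * r))
        = ∑ q ∈ Finset.range n, ∑ r ∈ Finset.range (n + 1),
          ((n : Kfield) / ((n - q - r : ℕ) : Kfield)) *
            (((n - 1 - r).choose q * ((n - 1 - q).choose r) : ℕ) : Kfield) *
            X1 ^ (2 * q) * X2 ^ (2 * r) := by
          refine Finset.sum_congr rfl fun q hq => ?_
          refine Finset.sum_subset (Finset.range_subset_range.mpr (by omega)) fun r hr hr' => ?_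
          simp only [Finset.mem_range] at hq hr hr'
          exact hZzero q r (by omega)
      _ = ∑ q ∈ Finset.range (n + 1), ∑ r ∈ Finset.range (n + 1),
          ((n : Kfield) / ((n - q - r : ℕ) : Kfield)) *
            (((n - 1 - r).choose q * ((n - 1 - q).choose r) : ℕ) : Kfield) *
            X1 ^ (2 * q) * X2 ^ (2 * r) := by
          refine Finset.sum_subset (Finset.range_subset_range.mpr (by omega)) fun q hq hq' => ?_
          simp only [Finset.mem_range] at hq hq'
          exact Finset.sum_eq_zero fun r hr => hZzero q r (by omega)
  have hG : X1 ^ 2 * X2 ^ 2 *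
        (∑ q ∈ Finset.range (n - 2 + 1), ∑ r ∈ Finset.range (n - 2 + 1 - q),
          (((n - 2 - r).choose q * (n - 2 - q).choose r : ℕ) : Kfield) * X1 ^ (2 * q) * X2 ^ (2 * r))
      = ∑ q ∈ Finset.range (n + 1), ∑ r ∈ Finset.range (n + 1),
        (if q = 0 ∨ r = 0 then 0
          else (((n - 1 - r).choose (q - 1) * ((n - 1 - q).choose (r - 1)) : ℕ) : Kfield)) *
          X1 ^ (2 * q) * X2 ^ (2 * r) := by
    have hvan : ∀ q r : ℕ, q < n → r < n → n - 1 ≤ q + r →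
        (n - 2 - r).choose q * (n - 2 - q).choose r = 0 := by
      intro q r hq hr h
      rcases (show n - 2 - r < q ∨ n - 2 - q < r by omega) with h' | h'
      · rw [Nat.choose_eq_zero_of_lt h', zero_mul]
      · rw [Nat.choose_eq_zero_of_lt h', mul_zero]
    have hM1 : X1 ^ 2 * X2 ^ 2 *
          (∑ q ∈ Finset.range (n - 2 + 1), ∑ r ∈ Finset.range (n - 2 + 1 - q),
            (((n - 2 - r).choose q * (n - 2 - q).choose r : ℕ) : Kfield) * X1 ^ (2 * q) * X2 ^ (2 * r))
        = ∑ q ∈ Finset.range n, ∑ r ∈ Finset.range n,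
            (((n - 2 - r).choose q * (n - 2 - q).choose r : ℕ) : Kfield) *
              X1 ^ (2 * (q + 1)) * X2 ^ (2 * (r + 1)) := by
      rw [show n - 2 + 1 = n - 1 by omega]
      have step1 : (∑ q ∈ Finset.range (n - 1), ∑ r ∈ Finset.range (n - 1 - q),
            (((n - 2 - r).choose q * (n - 2 - q).choose r : ℕ) : Kfield) * X1 ^ (2 * q) * X2 ^ (2 * r))
          = ∑ q ∈ Finset.range n, ∑ r ∈ Finset.range n,
            (((n - 2 - r).choose q * (n - 2 - q).choose r : ℕ) : Kfield) * X1 ^ (2 * q) * X2 ^ (2 * r) := by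
        calc (∑ q ∈ Finset.range (n - 1), ∑ r ∈ Finset.range (n - 1 - q),
              (((n - 2 - r).choose q * (n - 2 - q).choose r : ℕ) : Kfield) * X1 ^ (2 * q) * X2 ^ (2 * r))
            = ∑ q ∈ Finset.range (n - 1), ∑ r ∈ Finset.range n,
              (((n - 2 - r).choose q * (n - 2 - q).choose r : ℕ) : Kfield) * X1 ^ (2 * q) * X2 ^ (2 * r) := by
              refine Finset.sum_congr rfl fun q hq => ?_
              refine Finset.sum_subset (Finset.range_subset_range.mpr (by omega)) fun r hr hr' => ?_
              simp only [Finset.mem_range] at hq hr hr'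
              rw [hvan q r (by omega) (by omega) (by omega)]
              simp
          _ = ∑ q ∈ Finset.range n, ∑ r ∈ Finset.range n,
              (((n - 2 - r).choose q * (n - 2 - q).choose r : ℕ) : Kfield) * X1 ^ (2 * q) * X2 ^ (2 * r) := by
              refine Finset.sum_subset (Finset.range_subset_range.mpr (by omega)) fun q hq hq' => ?_
              simp only [Finset.mem_range] at hq hq'
              refine Finset.sum_eq_zero fun r hr => ?_
              simp only [Finset.mem_range] at hr
              rw [hvan q r (by omega) (by omega) (by omega)]
              simp
      rw [step1, Finset.mul_sum]
      refine Finset.sum_congr rfl fun q hq => ?_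
      rw [Finset.mul_sum]
      refine Finset.sum_congr rfl fun r hr => ?_
      ring
    have hM2 : (∑ q ∈ Finset.range (n + 1), ∑ r ∈ Finset.range (n + 1),
          (if q = 0 ∨ r = 0 then 0
            else (((n - 1 - r).choose (q - 1) * ((n - 1 - q).choose (r - 1)) : ℕ) : Kfield)) *
            X1 ^ (2 * q) * X2 ^ (2 * r))
        = ∑ q ∈ Finset.range n, ∑ r ∈ Finset.range n,
            (((n - 2 - r).choose q * (n - 2 - q).choose r : ℕ) : Kfield) *
              X1 ^ (2 * (q + 1)) * X2 ^ (2 * (r + 1)) := by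
      rw [Finset.sum_range_succ']
      have h0 : (∑ r ∈ Finset.range (n + 1),
          (if (0:ℕ) = 0 ∨ r = 0 then 0
            else (((n - 1 - r).choose (0 - 1) * ((n - 1 - 0).choose (r - 1)) : ℕ) : Kfield)) *
            X1 ^ (2 * 0) * X2 ^ (2 * r)) = 0 := by
        refine Finset.sum_eq_zero fun r hr => ?_
        simp
      rw [h0, add_zero]
      refine Finset.sum_congr rfl fun q hq => ?_
      rw [Finset.sum_range_succ']
      have h1 : (if q + 1 = 0 ∨ (0:ℕ) = 0 then 0
            else (((n - 1 - 0).choose (q + 1 - 1) * ((n - 1 - (q + 1)).choose (0 - 1)) : ℕ) : Kfield)) *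
            X1 ^ (2 * (q + 1)) * X2 ^ (2 * 0) = 0 := by
        simp
      rw [h1, add_zero]
      refine Finset.sum_congr rfl fun r hr => ?_
      rw [if_neg (by omega : ¬(q + 1 = 0 ∨ r + 1 = 0)),
        show n - 1 - (r + 1) = n - 2 - r by omega, show n - 1 - (q + 1) = n - 2 - q by omega,
        Nat.add_sub_cancel, Nat.add_sub_cancel]
    rw [hM1, hM2]
  have hI1 : (∑ q ∈ Finset.range (n + 1), ∑ r ∈ Finset.range (n + 1),
        (if q = n ∧ r = 0 then (1:Kfield) else 0) * X1 ^ (2 * q) * X2 ^ (2 * r)) = X1 ^ (2 * n) := by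
    have inner : ∀ q, (∑ r ∈ Finset.range (n + 1),
        (if q = n ∧ r = 0 then (1:Kfield) else 0) * X1 ^ (2 * q) * X2 ^ (2 * r))
        = if q = n then X1 ^ (2 * n) else 0 := by
      intro q
      by_cases hqn : q = n
      · subst hqn
        rw [Finset.sum_eq_single_of_mem 0 (Finset.mem_range.mpr (by omega))
          (fun r hr hr0 => by simp [hr0])]
        simp
      · simp [hqn]
    rw [Finset.sum_congr rfl (fun q _ => inner q),
      Finset.sum_ite_eq' (Finset.range (n + 1)) n (fun _ => X1 ^ (2 * n))]
    simp
  have hI2 : (∑ q ∈ Finset.range (n + 1), ∑ r ∈ Finset.range (n + 1),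
        (if q = 0 ∧ r = n then (1:Kfield) else 0) * X1 ^ (2 * q) * X2 ^ (2 * r)) = X2 ^ (2 * n) := by
    have inner : ∀ q, (∑ r ∈ Finset.range (n + 1),
        (if q = 0 ∧ r = n then (1:Kfield) else 0) * X1 ^ (2 * q) * X2 ^ (2 * r))
        = if q = 0 then X2 ^ (2 * n) else 0 := by
      intro q
      by_cases hq0 : q = 0
      · subst hq0
        rw [Finset.sum_eq_single_of_mem n (Finset.mem_range.mpr (by omega))
          (fun r hr hrn => by simp [hrn])]
        simp
      · simp [hq0]
    rw [Finset.sum_congr rfl (fun q _ => inner q),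
      Finset.sum_ite_eq' (Finset.range (n + 1)) 0 (fun _ => X2 ^ (2 * n))]
    simp
  have hmain : (∑ q ∈ Finset.range (n + 1), ∑ r ∈ Finset.range (n + 1),
        (((n - r).choose q * (n - q).choose r : ℕ) : Kfield) * X1 ^ (2 * q) * X2 ^ (2 * r))
      = (∑ q ∈ Finset.range (n + 1), ∑ r ∈ Finset.range (n + 1),
          ((n : Kfield) / ((n - q - r : ℕ) : Kfield)) *
            (((n - 1 - r).choose q * ((n - 1 - q).choose r) : ℕ) : Kfield) *
            X1 ^ (2 * q) * X2 ^ (2 * r))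
        + (∑ q ∈ Finset.range (n + 1), ∑ r ∈ Finset.range (n + 1),
            (if q = 0 ∨ r = 0 then 0
              else (((n - 1 - r).choose (q - 1) * ((n - 1 - q).choose (r - 1)) : ℕ) : Kfield)) *
              X1 ^ (2 * q) * X2 ^ (2 * r))
        + X1 ^ (2 * n) + X2 ^ (2 * n) := by
    rw [← hI1, ← hI2]
    rw [← Finset.sum_add_distrib, ← Finset.sum_add_distrib, ← Finset.sum_add_distrib]
    refine Finset.sum_congr rfl fun q hq => ?_
    rw [← Finset.sum_add_distrib, ← Finset.sum_add_distrib, ← Finset.sum_add_distrib]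
    refine Finset.sum_congr rfl fun r hr => ?_
    simp only [Finset.mem_range] at hq hr
    linear_combination (X1 ^ (2 * q) * X2 ^ (2 * r)) * key n q r hn (by omega) (by omega)
  rw [hZ, hS, hG]
  linear_combination -hmain

/-- With `s_n` and `z_n` given by their explicit Laurent-polynomial formulas, the relation
`z_n = s_n − s_{n-2}` holds for all `n ≥ 2`. -/
theorem stmt12 (s z : ℕ → Kfield)
    (hs : ∀ n : ℕ, s n = X1 ^ (-(n : ℤ)) * X2 ^ (-(n : ℤ)) *
      ∑ q ∈ Finset.range (n + 1), ∑ r ∈ Finset.range (n + 1 - q),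
        (((n - r).choose q * (n - q).choose r : ℕ) : Kfield) * X1 ^ (2 * q) * X2 ^ (2 * r))
    (hzf : ∀ n : ℕ, 1 ≤ n → z n = X1 ^ (-(n : ℤ)) * X2 ^ (-(n : ℤ)) *
      (X1 ^ (2 * n) + X2 ^ (2 * n) +
        ∑ q ∈ Finset.range n, ∑ r ∈ Finset.range (n - q),
          ((n : Kfield) / ((n - q - r : ℕ) : Kfield)) *
            (((n - 1 - r).choose q * ((n - 1 - q).choose r) : ℕ) : Kfield) *
            X1 ^ (2 * q) * X2 ^ (2 * r))) :
    ∀ n : ℕ, 2 ≤ n → z n = s n - s (n - 2) := by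
  intro n hn
  have hinj := IsFractionRing.injective (MvPolynomial (Fin 2) ℚ) Kfield
  have hX1 : X1 ≠ 0 := fun h => MvPolynomial.X_ne_zero 0 ((map_eq_zero_iff _ hinj).mp h)
  have hX2 : X2 ≠ 0 := fun h => MvPolynomial.X_ne_zero 1 ((map_eq_zero_iff _ hinj).mp h)
  have hz1 : ∀ (x : Kfield), x ≠ 0 → x ^ (-((n - 2 : ℕ) : ℤ)) = x ^ (-(n : ℤ)) * x ^ (2 : ℕ) := by
    intro x hx
    rw [show (-((n - 2 : ℕ) : ℤ)) = -(n : ℤ) + ((2 : ℕ) : ℤ) by omega, zpow_add₀ hx, zpow_natCast]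
  rw [hzf n (by omega), hs n, hs (n - 2), hz1 X1 hX1, hz1 X2 hX2]
  linear_combination (X1 ^ (-(n : ℤ)) * X2 ^ (-(n : ℤ))) * core_id n hn
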